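/- For every a > 0, the kernel Q_a(s,t) := 2[ (s+t) log(s+t) − (t+a) log(t+a) − (s+a) log(s+a) + 2a log(2a) ]·1_{{s ≥ a}}·1_{{t ≥ a}} on [0,∞) × [0,∞) is positive semidefinite: for every n ∈ ℕ, all x_1,…,x_n ≥ 0 and all real numbers y_1,…,y_n, Σ_{i=1}^n Σ_{j=1}^n y_i y_j Q_a(x_i, x_j) ≥ 0. -/

import Mathlib

open MeasureTheory Real

/-- The kernel `Q_a(s,t)` with indicators `1_{s ≥ a} 1_{t ≥ a}`. -/
noncomputable def Qa (a s t : ℝ) : ℝ :=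
  if a ≤ s ∧ a ≤ t then
    2 * ((s + t) * Real.log (s + t) - (t + a) * Real.log (t + a)
        - (s + a) * Real.log (s + a) + 2 * a * Real.log (2 * a))
  else 0

open Set Filter

namespace QaAux

lemma hasDerivAt_exp_neg_mul (l : ℝ) (q : ℝ) :
    HasDerivAt (fun s : ℝ => rexp (-s * l)) (-l * rexp (-q * l)) q := by
  have h1 : HasDerivAt (fun s : ℝ => -s * l) (-l) q := by
    simpa using (hasDerivAt_id q).neg.mul_const l
  simpa [mul_comm, Function.comp_def] using (Real.hasDerivAt_exp (-q*l)).comp q h1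

lemma hasDerivAt_exp_neg_mul' (b : ℝ) (q : ℝ) :
    HasDerivAt (fun l : ℝ => rexp (-b * l)) (-b * rexp (-b * q)) q := by
  have h1 : HasDerivAt (fun l : ℝ => -b * l) (-b) q := by
    simpa using (hasDerivAt_id q).const_mul (-b)
  have h2 := (Real.hasDerivAt_exp (-b*q)).comp q h1
  simpa [Function.comp_def, mul_comm] using h2

lemma exp_diff_nonneg {p q l : ℝ} (hpq : p ≤ q) (hl : 0 ≤ l) :
    0 ≤ rexp (-p*l) - rexp (-q*l) := by
  have h : -q*l ≤ -p*l := by nlinarith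
  simpa using Real.exp_le_exp.2 h

lemma exp_diff_le {p q l : ℝ} (hpq : p ≤ q) (hl : 0 ≤ l) :
    rexp (-p*l) - rexp (-q*l) ≤ (q-p) * l * rexp (-p*l) := by
  have h1 : rexp (-q*l) = rexp (-p*l) * rexp (-(q-p)*l) := by
    rw [← Real.exp_add]; ring_nf
  have h2 : 1 - rexp (-(q-p)*l) ≤ (q-p)*l := by
    have := Real.add_one_le_exp (-(q-p)*l)
    nlinarith
  have he : 0 < rexp (-p*l) := Real.exp_pos _
  calc rexp (-p*l) - rexp (-q*l) = rexp (-p*l) * (1 - rexp (-(q-p)*l)) := by rw [h1]; ring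
  _ ≤ rexp (-p*l) * ((q-p)*l) := by nlinarith
  _ = (q-p)*l*rexp (-p*l) := by ring

lemma integral_exp_neg_Ioi_pos {b : ℝ} (hb : 0 < b) :
    ∫ l in Ioi (0:ℝ), rexp (-b*l) = 1/b := by
  have h := integral_Ioi_of_hasDerivAt_of_tendsto' (f := fun l => -rexp (-b*l)/b)
    (f' := fun l => rexp (-b*l)) (a := 0) (m := 0) ?_ ?_ ?_
  · rw [h]; field_simp; simp
  · intro xx _
    have h2 := ((hasDerivAt_exp_neg_mul' b xx).neg).div_const b
    refine h2.congr_deriv ?_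
    rw [div_eq_iff hb.ne']; ring
  · exact exp_neg_integrableOn_Ioi 0 hb
  · have h3 : Tendsto (fun l : ℝ => -b*l) atTop atBot := by
      apply Tendsto.const_mul_atTop_of_neg (neg_neg_iff_pos.mpr hb) tendsto_id
    have := (Real.tendsto_exp_atBot.comp h3).neg.div_const b
    simpa using this

lemma meas_aux (p c : ℝ) :
    AEStronglyMeasurable (fun l => (rexp (-p*l) - rexp (-c*l))/l)
      (volume.restrict (Ioi (0:ℝ))) := by
  apply Measurable.aestronglyMeasurable
  exact (((Real.continuous_exp.comp (continuous_const.mul continuous_id (M := ℝ))).sub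
    (Real.continuous_exp.comp (continuous_const.mul continuous_id (M := ℝ)))).measurable).div measurable_id

lemma frullani {p q : ℝ} (hp : 0 < p) (hpq : p ≤ q) :
    ∫ l in Ioi (0:ℝ), (rexp (-p*l) - rexp (-q*l)) / l = Real.log q - Real.log p := by
  set Ψ : ℝ → ℝ := fun r => ∫ l in Ioi (0:ℝ), (rexp (-p*l) - rexp (-r*l)) / l with hΨ
  have key : ∀ r ∈ Set.uIcc p q, HasDerivAt Ψ (1/r) r := by
    intro r hr
    rw [Set.uIcc_of_le hpq] at hr
    have hpr : p ≤ r := hr.1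
    have hr0 : 0 < r := lt_of_lt_of_le hp hpr
    have hd := hasDerivAt_integral_of_dominated_loc_of_deriv_le
      (μ := volume.restrict (Ioi (0:ℝ)))
      (F := fun r l => (rexp (-p*l) - rexp (-r*l))/l)
      (F' := fun r l => rexp (-r*l))
      (x₀ := r) (bound := fun l => rexp (-(p/2)*l)) (s := Metric.ball r (p/2)) (Metric.ball_mem_nhds r (by positivity))
      (Eventually.of_forall fun c => meas_aux p c)
      ?_ ?_ ?_ ?_ ?_
    · have h2 := hd.2
      rwa [integral_exp_neg_Ioi_pos hr0] at h2
    · -- Integrable (F r)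
      apply Integrable.mono' (((exp_neg_integrableOn_Ioi 0 hp).const_mul (r-p))) (meas_aux p r)
      filter_upwards [ae_restrict_mem measurableSet_Ioi] with l hl
      have hl0 : (0:ℝ) < l := hl
      rw [Real.norm_eq_abs, abs_of_nonneg (div_nonneg (exp_diff_nonneg hpr hl0.le) hl0.le)]
      rw [div_le_iff₀ hl0]
      have := exp_diff_le hpr hl0.le
      nlinarith [Real.exp_pos (-p*l)]
    · exact (Real.continuous_exp.comp (continuous_const.mul continuous_id (M := ℝ))).measurable.aestronglyMeasurable
    · filter_upwards [ae_restrict_mem measurableSet_Ioi] with l hl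
      intro c hc
      have hl0 : (0:ℝ) < l := hl
      rw [Real.norm_eq_abs, Real.abs_exp]
      apply Real.exp_le_exp.2
      have : p/2 ≤ c := by
        have := abs_lt.1 (mem_ball_iff_norm.1 hc)
        linarith
      nlinarith
    · exact exp_neg_integrableOn_Ioi 0 (by positivity)
    · filter_upwards [ae_restrict_mem measurableSet_Ioi] with l hl
      intro c hc
      have hl0 : (0:ℝ) < l := hl
      have h1 := ((hasDerivAt_const c (rexp (-p*l))).sub (hasDerivAt_exp_neg_mul l c)).div_const l
      refine h1.congr_deriv ?_
      rw [div_eq_iff hl0.ne']; ring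
  have h2 : IntervalIntegrable (fun r => 1/r) volume p q := by
    apply ContinuousOn.intervalIntegrable
    intro r hr
    rw [Set.uIcc_of_le hpq] at hr
    have : (0:ℝ) < r := lt_of_lt_of_le hp hr.1
    exact (continuousAt_const.div continuousAt_id (ne_of_gt this)).continuousWithinAt
  have h3 := intervalIntegral.integral_eq_sub_of_hasDerivAt key h2
  have h0 : (0:ℝ) ∉ Set.uIcc p q := by
    rw [Set.uIcc_of_le hpq]
    intro h
    exact absurd h.1 (not_le.2 hp)
  rw [integral_one_div h0, Real.log_div (by linarith : q ≠ 0) (ne_of_gt hp)] at h3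
  have hΨp : Ψ p = 0 := by simp [hΨ]
  have : Ψ q = Real.log q - Real.log p := by rw [hΨp] at h3; linarith
  exact this

lemma meas_aux2 (a c t : ℝ) :
    AEStronglyMeasurable
      (fun l => (rexp (-a*l) - rexp (-c*l)) * (rexp (-a*l) - rexp (-t*l)) / l^2)
      (volume.restrict (Ioi (0:ℝ))) := by
  apply Measurable.aestronglyMeasurable
  have h : ∀ c : ℝ, Measurable (fun l : ℝ => rexp (-c*l)) := fun c =>
    (Real.continuous_exp.comp (continuous_const.mul continuous_id (M := ℝ))).measurable
  exact (((h a).sub (h c)).mul ((h a).sub (h t))).div ((measurable_id.pow_const 2))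

lemma key2 {a s t : ℝ} (ha : 0 < a) (hs : a ≤ s) (ht : a ≤ t) :
    ∫ l in Ioi (0:ℝ), (rexp (-a*l) - rexp (-s*l)) * (rexp (-a*l) - rexp (-t*l)) / l^2
      = (s+t)*Real.log (s+t) - (t+a)*Real.log (t+a) - (s+a)*Real.log (s+a)
        + 2*a*Real.log (2*a) := by
  set Φ : ℝ → ℝ := fun r => ∫ l in Ioi (0:ℝ),
      (rexp (-a*l) - rexp (-r*l)) * (rexp (-a*l) - rexp (-t*l)) / l^2 with hΦ
  have key : ∀ r ∈ Set.uIcc a s, HasDerivAt Φ (Real.log (r+t) - Real.log (r+a)) r := by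
    intro r hr
    rw [Set.uIcc_of_le hs] at hr
    have har : a ≤ r := hr.1
    have hr0 : 0 < r := lt_of_lt_of_le ha har
    have hd := hasDerivAt_integral_of_dominated_loc_of_deriv_le
      (μ := volume.restrict (Ioi (0:ℝ)))
      (F := fun r l => (rexp (-a*l) - rexp (-r*l)) * (rexp (-a*l) - rexp (-t*l)) / l^2)
      (F' := fun r l => rexp (-r*l) * (rexp (-a*l) - rexp (-t*l)) / l)
      (x₀ := r) (bound := fun l => (t-a) * rexp (-(a/2+a)*l)) (s := Metric.ball r (a/2)) (Metric.ball_mem_nhds r (by positivity))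
      (Eventually.of_forall fun c => meas_aux2 a c t)
      ?_ ?_ ?_ ?_ ?_
    · have h2 := hd.2
      have hcong : ∀ l : ℝ, rexp (-r*l) * (rexp (-a*l) - rexp (-t*l)) / l
          = (rexp (-(r+a)*l) - rexp (-(r+t)*l)) / l := by
        intro l
        rw [mul_sub, ← Real.exp_add, ← Real.exp_add]
        ring_nf
      simp_rw [hcong] at h2
      rwa [frullani (by linarith) (by linarith)] at h2
    · -- Integrable (F r)
      apply Integrable.mono' (((exp_neg_integrableOn_Ioi 0 (by linarith : (0:ℝ) < 2*a)).const_mul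
        ((r-a)*(t-a)))) (meas_aux2 a r t)
      filter_upwards [ae_restrict_mem measurableSet_Ioi] with l hl
      have hl0 : (0:ℝ) < l := hl
      have h1 : 0 ≤ rexp (-a*l) - rexp (-r*l) := exp_diff_nonneg har hl0.le
      have h2 : 0 ≤ rexp (-a*l) - rexp (-t*l) := exp_diff_nonneg ht hl0.le
      have h3 := exp_diff_le har hl0.le
      have h4 := exp_diff_le ht hl0.le
      rw [Real.norm_eq_abs, abs_of_nonneg (div_nonneg (mul_nonneg h1 h2) (by positivity))]
      rw [div_le_iff₀ (by positivity)]
      have hee : rexp (-a*l) * rexp (-a*l) = rexp (-(2*a)*l) := by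
        rw [← Real.exp_add]; ring_nf
      have h5 : 0 ≤ (r-a)*l*rexp (-a*l) := by
        have := Real.exp_pos (-a*l); nlinarith
      have h6 : (r-a)*l*rexp (-a*l) * ((t-a)*l*rexp (-a*l))
          = (r-a)*(t-a)*rexp (-(2*a)*l) * l^2 := by rw [← hee]; ring
      have h7 := mul_le_mul h3 h4 h2 h5
      linarith
    · apply Measurable.aestronglyMeasurable
      have h : ∀ c : ℝ, Measurable (fun l : ℝ => rexp (-c*l)) := fun c =>
        (Real.continuous_exp.comp (continuous_const.mul continuous_id (M := ℝ))).measurable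
      exact (((h r).mul ((h a).sub (h t)))).div measurable_id
    · filter_upwards [ae_restrict_mem measurableSet_Ioi] with l hl
      intro c hc
      have hl0 : (0:ℝ) < l := hl
      have hca : a/2 ≤ c := by
        have := abs_lt.1 (mem_ball_iff_norm.1 hc)
        linarith
      have h2 : 0 ≤ rexp (-a*l) - rexp (-t*l) := exp_diff_nonneg ht hl0.le
      have h4 := exp_diff_le ht hl0.le
      have h5 : rexp (-c*l) ≤ rexp (-(a/2)*l) := by
        apply Real.exp_le_exp.2; nlinarith
      rw [Real.norm_eq_abs, abs_of_nonneg (by positivity)]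
      rw [div_le_iff₀ hl0]
      have hee : rexp (-(a/2)*l) * rexp (-a*l) = rexp (-(a/2+a)*l) := by
        rw [← Real.exp_add]; ring_nf
      have h6 : rexp (-(a/2)*l) * ((t-a)*l*rexp (-a*l)) = (t-a)*rexp (-(a/2+a)*l)*l := by
        rw [← hee]; ring
      have h7 := mul_le_mul h5 h4 h2 (Real.exp_pos _).le
      linarith
    · exact (exp_neg_integrableOn_Ioi 0 (by linarith : (0:ℝ) < a/2+a)).const_mul _
    · filter_upwards [ae_restrict_mem measurableSet_Ioi] with l hl
      intro c hc
      have hl0 : (0:ℝ) < l := hl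
      have h1 := (((hasDerivAt_const c (rexp (-a*l))).sub
        (hasDerivAt_exp_neg_mul l c)).mul_const (rexp (-a*l) - rexp (-t*l))).div_const (l^2)
      refine h1.congr_deriv ?_
      rw [div_eq_div_iff (by positivity) hl0.ne']; ring
  have h2 : IntervalIntegrable (fun u => Real.log (u+t) - Real.log (u+a)) volume a s := by
    apply ContinuousOn.intervalIntegrable
    intro u hu
    rw [Set.uIcc_of_le hs] at hu
    have h1 : (0:ℝ) < u + t := by have := hu.1; linarith
    have h2 : (0:ℝ) < u + a := by have := hu.1; linarith
    have hc1 : ContinuousAt (fun v : ℝ => Real.log (v + t)) u :=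
      ContinuousAt.comp (f := fun v : ℝ => v + t)
        (Real.continuousAt_log (ne_of_gt h1)) (continuousAt_id.add continuousAt_const)
    have hc2 : ContinuousAt (fun v : ℝ => Real.log (v + a)) u :=
      ContinuousAt.comp (f := fun v : ℝ => v + a)
        (Real.continuousAt_log (ne_of_gt h2)) (continuousAt_id.add continuousAt_const)
    exact (hc1.sub hc2).continuousWithinAt
  have h3 := intervalIntegral.integral_eq_sub_of_hasDerivAt key h2
  -- now FTC with explicit antiderivative
  set G : ℝ → ℝ := fun u => ((u+t)*Real.log (u+t) - (u+t)) - ((u+a)*Real.log (u+a) - (u+a))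
    with hG
  have keyG : ∀ u ∈ Set.uIcc a s, HasDerivAt G (Real.log (u+t) - Real.log (u+a)) u := by
    intro u hu
    rw [Set.uIcc_of_le hs] at hu
    have hc : ∀ c : ℝ, 0 < u + c →
        HasDerivAt (fun u => (u+c)*Real.log (u+c) - (u+c)) (Real.log (u+c)) u := by
      intro c hpos
      have hder := (Real.hasDerivAt_mul_log (ne_of_gt hpos)).comp u
        ((hasDerivAt_id u).add_const c)
      have h2 := hder.sub ((hasDerivAt_id u).add_const c)
      refine h2.congr_deriv ?_
      simp
    exact (hc t (by have := hu.1; linarith)).sub (hc a (by have := hu.1; linarith))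
  have h4 := intervalIntegral.integral_eq_sub_of_hasDerivAt keyG h2
  have hΦa : Φ a = 0 := by simp [hΦ]
  have hfin : Φ s = G s - G a := by rw [← h4, h3, hΦa]; ring
  rw [hΦ] at hfin
  simp only at hfin
  rw [hfin, hG]
  ring_nf

end QaAux

open QaAux

theorem stmt_2 (a : ℝ) (ha : 0 < a) (n : ℕ) (x : Fin n → ℝ) (y : Fin n → ℝ)
    (hx : ∀ i, 0 ≤ x i) :
    0 ≤ ∑ i, ∑ j, y i * y j * Qa a (x i) (x j) := by
  classical
  set h : Fin n → ℝ → ℝ :=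
    fun i l => if a ≤ x i then (rexp (-a*l) - rexp (-(x i)*l))/l else 0 with hh
  have hmeas : ∀ i, AEStronglyMeasurable (h i) (volume.restrict (Ioi (0:ℝ))) := by
    intro i
    by_cases hc : a ≤ x i
    · simp only [hh, if_pos hc]
      exact meas_aux a (x i)
    · simp only [hh, if_neg hc]
      exact aestronglyMeasurable_const
  have hbb : ∀ i, ∀ l ∈ Ioi (0:ℝ), 0 ≤ h i l ∧ h i l ≤ (x i) * rexp (-a*l) := by
    intro i l hl
    have hl0 : (0:ℝ) < l := hl
    by_cases hc : a ≤ x i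
    · simp only [hh, if_pos hc]
      refine ⟨div_nonneg (exp_diff_nonneg hc hl0.le) hl0.le, ?_⟩
      rw [div_le_iff₀ hl0]
      have h1 := exp_diff_le hc hl0.le
      have he := Real.exp_pos (-a*l)
      nlinarith [mul_pos (mul_pos ha hl0) he]
    · simp only [hh, if_neg hc]
      have := hx i
      exact ⟨le_refl 0, by positivity⟩
  have hint : ∀ i j, Integrable (fun l => 2 * (y i * h i l) * (y j * h j l))
      (volume.restrict (Ioi (0:ℝ))) := by
    intro i j
    apply Integrable.mono' ((exp_neg_integrableOn_Ioi 0
        (by linarith : (0:ℝ) < 2*a)).const_mul (2 * |y i| * |y j| * x i * x j))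
    · exact (((hmeas i).const_mul (y i)).const_mul 2).mul ((hmeas j).const_mul (y j))
    · filter_upwards [ae_restrict_mem measurableSet_Ioi] with l hl
      obtain ⟨hi0, hib⟩ := hbb i l hl
      obtain ⟨hj0, hjb⟩ := hbb j l hl
      have hee : rexp (-a*l) * rexp (-a*l) = rexp (-(2*a)*l) := by
        rw [← Real.exp_add]; ring_nf
      have habs : ‖2 * (y i * h i l) * (y j * h j l)‖
          = 2 * |y i| * |y j| * (h i l * h j l) := by
        rw [Real.norm_eq_abs, abs_mul, abs_mul, abs_mul, abs_mul,
          abs_of_nonneg hi0, abs_of_nonneg hj0]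
        norm_num
        ring
      rw [habs]
      have h1 : h i l * h j l ≤ (x i * rexp (-a*l)) * (x j * rexp (-a*l)) :=
        mul_le_mul hib hjb hj0 (by have := hx i; positivity)
      have h2 : (x i * rexp (-a*l)) * (x j * rexp (-a*l))
          = x i * x j * rexp (-(2*a)*l) := by rw [← hee]; ring
      have h3 : (0:ℝ) ≤ 2 * |y i| * |y j| := by positivity
      nlinarith [mul_le_mul_of_nonneg_left (h1.trans_eq h2) h3]
  have hQ : ∀ i j, y i * y j * Qa a (x i) (x j)
      = ∫ l in Ioi (0:ℝ), 2 * (y i * h i l) * (y j * h j l) := by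
    intro i j
    by_cases hc : a ≤ x i ∧ a ≤ x j
    · have e1 : ∀ l : ℝ, 2 * (y i * h i l) * (y j * h j l)
          = (2 * (y i * y j)) * ((rexp (-a*l) - rexp (-(x i)*l))
            * (rexp (-a*l) - rexp (-(x j)*l)) / l^2) := by
        intro l
        simp only [hh, if_pos hc.1, if_pos hc.2]
        ring
      simp_rw [e1]
      rw [MeasureTheory.integral_const_mul, key2 ha hc.1 hc.2]
      simp only [Qa, if_pos hc]
      ring
    · have e0 : ∀ l : ℝ, 2 * (y i * h i l) * (y j * h j l) = 0 := by
        intro l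
        rcases not_and_or.1 hc with hni | hnj
        · simp [hh, if_neg hni]
        · simp [hh, if_neg hnj]
      simp_rw [e0]
      simp only [Qa, if_neg hc]
      simp
  have step : ∑ i, ∑ j, y i * y j * Qa a (x i) (x j)
      = ∫ l in Ioi (0:ℝ), ∑ i, ∑ j, 2 * (y i * h i l) * (y j * h j l) := by
    simp_rw [hQ]
    calc ∑ i, ∑ j, ∫ l in Ioi (0:ℝ), 2 * (y i * h i l) * (y j * h j l)
        = ∑ i, ∫ l in Ioi (0:ℝ), ∑ j, 2 * (y i * h i l) * (y j * h j l) :=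
          Finset.sum_congr rfl (fun i _ =>
            (integral_finset_sum _ (fun j _ => hint i j)).symm)
      _ = ∫ l in Ioi (0:ℝ), ∑ i, ∑ j, 2 * (y i * h i l) * (y j * h j l) :=
          (integral_finset_sum _ (fun i _ =>
            integrable_finset_sum _ (fun j _ => hint i j))).symm
  rw [step]
  apply integral_nonneg
  intro l
  have hsq : ∑ i, ∑ j, 2 * (y i * h i l) * (y j * h j l)
      = 2 * (∑ i, y i * h i l)^2 := by
    rw [show (2:ℝ) * (∑ i, y i * h i l)^2
        = 2 * ((∑ i, y i * h i l) * (∑ j, y j * h j l)) from by ring,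
      Finset.sum_mul_sum, Finset.mul_sum]
    exact Finset.sum_congr rfl (fun i _ => by
      rw [Finset.mul_sum]
      exact Finset.sum_congr rfl (fun j _ => by ring))
  show (0:ℝ) ≤ ∑ i, ∑ j, 2 * (y i * h i l) * (y j * h j l)
  rw [hsq]
  positivity
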